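/- arXiv:2502.20659 — 4 statements merged into one kernel-verified Lean document; each statement's English description precedes it below -/
import Mathlib

section
/- The linear map R_{(m)}: V⊗V → V⊗V defined on basis elements by R(a,b) = Σ R^{ab}_{cd} (c,d) with R^{ab}_{cd} = 1 if d=a≥b=c, y² if d=a<b=c, 1−y² if c=a<b=d, and 0 otherwise, satisfies the Yang-Baxter equation (R⊗Id)∘(Id⊗R)∘(R⊗Id) = (Id⊗R)∘(R⊗Id)∘(Id⊗R). -/
/-- Boltzmann weights of the normalized Yang-Baxter operator `R_{(m)}`:
`Rc t a b c d` is the coefficient `R^{ab}_{cd}`, with `t` playing the role of `y²`. -/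
def Rc {k : Type*} [CommRing k] (t : k) {m : ℕ} (a b c d : Fin m) : k :=
  if d = a ∧ c = b ∧ b ≤ a then 1
  else if d = a ∧ c = b ∧ a < b then t
  else if c = a ∧ d = b ∧ a < b then 1 - t
  else 0

/-- The matrix of `R_{(m)}` on `V ⊗ V`, rows indexed by output pairs `(c,d)`,
columns by input pairs `(a,b)`. -/
def Rmat {k : Type*} [CommRing k] (t : k) (m : ℕ) :
    Matrix (Fin m × Fin m) (Fin m × Fin m) k :=
  fun cd ab => Rc t ab.1 ab.2 cd.1 cd.2

/-- The matrix of `R ⊗ Id` on `V ⊗ V ⊗ V`. -/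
def R12 {k : Type*} [CommRing k] (t : k) (m : ℕ) :
    Matrix (Fin m × Fin m × Fin m) (Fin m × Fin m × Fin m) k :=
  fun p q => Rmat t m (p.1, p.2.1) (q.1, q.2.1) * (if p.2.2 = q.2.2 then 1 else 0)

/-- The matrix of `Id ⊗ R` on `V ⊗ V ⊗ V`. -/
def R23 {k : Type*} [CommRing k] (t : k) (m : ℕ) :
    Matrix (Fin m × Fin m × Fin m) (Fin m × Fin m × Fin m) k :=
  fun p q => (if p.1 = q.1 then (1 : k) else 0) * Rmat t m (p.2.1, p.2.2) (q.2.1, q.2.2)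

/-!
Left multiplication by `R12` (resp. `R23`) acts on each column, viewed as a function `f` of the
row index `p = (a, b, c)`, as `f ↦ w • f ∘ s + v • f`, where `s` swaps two adjacent letters of
`p` and the weights `w, v` only depend on whether these letters increase: a Hecke algebra
generator acting on functions of words. Both sides of the braid relation for these operators
only involve the values of `f` at rearrangements of `p`, with coefficients depending only on the
relative order of `a, b, c`, so it reduces to a check over the order types of three letters.
-/

section HeckeOperators

variable {α k : Type*} [LinearOrder α] [CommRing k]

def swapWeight (t : k) (a b : α) : k := if a ≤ b then 1 else t

def stayWeight (t : k) (a b : α) : k := if a < b then 1 - t else 0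

def heckeOp₁₂ (t : k) (f : α × α × α → k) (p : α × α × α) : k :=
  swapWeight t p.1 p.2.1 * f (p.2.1, p.1, p.2.2) + stayWeight t p.1 p.2.1 * f p

def heckeOp₂₃ (t : k) (f : α × α × α → k) (p : α × α × α) : k :=
  swapWeight t p.2.1 p.2.2 * f (p.1, p.2.2, p.2.1) + stayWeight t p.2.1 p.2.2 * f p

variable (t : k) {a b : α}

theorem swapWeight_of_le (h : a ≤ b) : swapWeight t a b = 1 := if_pos h

theorem swapWeight_of_lt (h : b < a) : swapWeight t a b = t := if_neg h.not_ge

theorem stayWeight_of_lt (h : a < b) : stayWeight t a b = 1 - t := if_pos h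

theorem stayWeight_of_le (h : b ≤ a) : stayWeight t a b = 0 := if_neg h.not_gt

theorem heckeOp_braid (f : α × α × α → k) :
    heckeOp₁₂ t (heckeOp₂₃ t (heckeOp₁₂ t f)) = heckeOp₂₃ t (heckeOp₁₂ t (heckeOp₂₃ t f)) := by
  funext ⟨a, b, c⟩
  simp only [heckeOp₁₂, heckeOp₂₃]
  rcases lt_trichotomy a b with hab | hab | hab <;>
  rcases lt_trichotomy b c with hbc | hbc | hbc <;>
  rcases lt_trichotomy a c with hac | hac | hac <;>
  first
  | (exfalso; order)
  | (subst_vars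
     simp only [swapWeight_of_le, swapWeight_of_lt, stayWeight_of_le, stayWeight_of_lt,
       le_refl, le_of_lt, *] <;>
     ring)

end HeckeOperators

section Matrices

variable {k : Type*} [CommRing k] (t : k) {m : ℕ}

theorem R12_apply (p q : Fin m × Fin m × Fin m) :
    R12 t m p q = swapWeight t p.1 p.2.1 * (if q = (p.2.1, p.1, p.2.2) then 1 else 0)
      + stayWeight t p.1 p.2.1 * (if q = p then 1 else 0) := by
  obtain ⟨a, b, c⟩ := p
  obtain ⟨a', b', c'⟩ := q
  simp only [R12, Rmat, Rc, swapWeight, stayWeight, Prod.mk.injEq]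
  split_ifs <;> first | (exfalso; omega) | ring

theorem R23_apply (p q : Fin m × Fin m × Fin m) :
    R23 t m p q = swapWeight t p.2.1 p.2.2 * (if q = (p.1, p.2.2, p.2.1) then 1 else 0)
      + stayWeight t p.2.1 p.2.2 * (if q = p then 1 else 0) := by
  obtain ⟨a, b, c⟩ := p
  obtain ⟨a', b', c'⟩ := q
  simp only [R23, Rmat, Rc, swapWeight, stayWeight, Prod.mk.injEq]
  split_ifs <;> first | (exfalso; omega) | ring

theorem R12_mul_apply (X : Matrix (Fin m × Fin m × Fin m) (Fin m × Fin m × Fin m) k)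
    (p q : Fin m × Fin m × Fin m) :
    (R12 t m * X) p q = heckeOp₁₂ t (fun r => X r q) p := by
  simp [Matrix.mul_apply, R12_apply, heckeOp₁₂, add_mul, Finset.sum_add_distrib]

theorem R23_mul_apply (X : Matrix (Fin m × Fin m × Fin m) (Fin m × Fin m × Fin m) k)
    (p q : Fin m × Fin m × Fin m) :
    (R23 t m * X) p q = heckeOp₂₃ t (fun r => X r q) p := by
  simp [Matrix.mul_apply, R23_apply, heckeOp₂₃, add_mul, Finset.sum_add_distrib]

end Matrices

/-- The normalized operator `R_{(m)}` satisfies the Yang-Baxter equation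
`(R ⊗ Id) ∘ (Id ⊗ R) ∘ (R ⊗ Id) = (Id ⊗ R) ∘ (R ⊗ Id) ∘ (Id ⊗ R)`. -/
theorem yang_baxter_equation {k : Type*} [CommRing k] (t : k) (m : ℕ) :
    R12 t m * R23 t m * R12 t m = R23 t m * R12 t m * R23 t m := by
  have braid_mul (X : Matrix (Fin m × Fin m × Fin m) (Fin m × Fin m × Fin m) k) :
      R12 t m * (R23 t m * (R12 t m * X)) = R23 t m * (R12 t m * (R23 t m * X)) := by
    ext p q
    simp only [R12_mul_apply, R23_mul_apply]
    exact congrFun (heckeOp_braid t _) p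
  simpa only [Matrix.mul_assoc, Matrix.mul_one] using braid_mul 1
end

section
/- Every weakly order-preserving map f: X_{(m)} → X_{(m')} satisfies R_{(m')} ∘ (f ⊗ f) = (f ⊗ f) ∘ R_{(m)}, where f also denotes the induced k-linear map kX_{(m)} → kX_{(m')}. -/
/-- The matrix of the induced linear map `f ⊗ f : kX_{(m)} ⊗ kX_{(m)} → kX_{(m')} ⊗ kX_{(m')}`
for a map of bases `f : X_{(m)} → X_{(m')}`. -/
def Fmat {k : Type*} [CommRing k] (m m' : ℕ) (f : Fin m → Fin m') :
    Matrix (Fin m' × Fin m') (Fin m × Fin m) k :=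
  fun p q => if p.1 = f q.1 ∧ p.2 = f q.2 then 1 else 0

/-!
The column of `R_{(m)}` at `(a, b)`, i.e. `R (x_a ⊗ x_b)`, is `x_b ⊗ x_a` when `b ≤ a` and
`t • (x_b ⊗ x_a) + (1 - t) • (x_a ⊗ x_b)` when `a < b`. Since `f ⊗ f` sends `x_p ⊗ x_q` to
`x_{f p} ⊗ x_{f q}` and `f` is monotone, it sends this column to the column of `R_{(m')}` at
`(f a, f b)`: the case split is preserved, except when `a < b` but `f a = f b`, where the two
terms merge into `x_{f a} ⊗ x_{f a}` because `t + (1 - t) = 1`.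
-/

open Matrix

section

variable {k : Type*} [CommRing k]

def Rcol {α : Type*} [LinearOrder α] (t : k) (a b : α) : α × α → k :=
  if b ≤ a then Pi.single (b, a) 1
  else t • Pi.single (b, a) 1 + (1 - t) • Pi.single (a, b) 1

theorem col_Rmat (t : k) {m : ℕ} (a b : Fin m) : (Rmat t m).col (a, b) = Rcol t a b := by
  ext ⟨c, d⟩
  rcases le_or_gt b a with hba | hab
  · simp only [col_apply, Rmat, Rc, Rcol, hba, if_true, Pi.single_apply, Prod.ext_iff]
    grind
  · simp only [col_apply, Rmat, Rc, Rcol, hab.not_ge, if_false, Pi.add_apply, Pi.smul_apply,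
      Pi.single_apply, Prod.ext_iff, smul_eq_mul, mul_ite, mul_one, mul_zero]
    grind

section Fmat

variable {m m' : ℕ} (f : Fin m → Fin m')

theorem Fmat_apply (p : Fin m' × Fin m') (q : Fin m × Fin m) :
    Fmat (k := k) m m' f p q = if p = (f q.1, f q.2) then 1 else 0 := by
  simp only [Fmat, Prod.ext_iff]

theorem mul_Fmat_apply {ι : Type*} (A : Matrix ι (Fin m' × Fin m') k) (i : ι)
    (q : Fin m × Fin m) : (A * Fmat (k := k) m m' f) i q = A i (f q.1, f q.2) := by
  simp [mul_apply, Fmat_apply]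

theorem col_Fmat (q : Fin m × Fin m) :
    (Fmat (k := k) m m' f).col q = Pi.single (f q.1, f q.2) 1 := by
  ext p
  simp [Fmat_apply, Pi.single_apply]

end Fmat

theorem Fmat_mulVec_Rcol (t : k) {m m' : ℕ} {f : Fin m → Fin m'} (hf : Monotone f)
    (a b : Fin m) :
    Fmat (k := k) m m' f *ᵥ Rcol t a b = Rcol t (f a) (f b) := by
  rcases le_or_gt b a with hba | hab
  · simp [Rcol, hba, hf hba, col_Fmat]
  · rcases (hf hab.le).lt_or_eq with hlt | heq
    · simp [Rcol, hab.not_ge, hlt.not_ge, mulVec_add, mulVec_smul, col_Fmat]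
    · simp [Rcol, hab.not_ge, heq, mulVec_add, mulVec_smul, col_Fmat, ← add_smul]

end

/-- Every weakly order-preserving map `f : X_{(m)} → X_{(m')}` satisfies
`R_{(m')} ∘ (f ⊗ f) = (f ⊗ f) ∘ R_{(m)}`. -/
theorem weakly_order_preserving_commutes {k : Type*} [CommRing k] (t : k)
    (m m' : ℕ) (f : Fin m → Fin m') (hf : Monotone f) :
    Rmat t m' * Fmat (k := k) m m' f = Fmat (k := k) m m' f * Rmat t m := by
  ext p ⟨a, b⟩
  calc (Rmat t m' * Fmat (k := k) m m' f) p (a, b) = (Rmat t m').col (f a, f b) p :=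
        mul_Fmat_apply f _ p (a, b)
    _ = (Fmat (k := k) m m' f *ᵥ (Rmat t m).col (a, b)) p := by
        rw [col_Rmat, col_Rmat, Fmat_mulVec_Rcol t hf]
    _ = (Fmat (k := k) m m' f * Rmat t m) p (a, b) := rfl
end

section
/- The duality map τ_m satisfies the precubic morphism identity: for every n, every 1 ≤ i ≤ n, τ_m ∘ d_{i,n}^ℓ = d_{n+1−i,n}^r ∘ τ_m, where τ_m(a_1,...,a_n) = (m+1−a_n, ..., m+1−a_1). -/
noncomputable section

/-- The matrix (on the standard basis of `(kX_{(m)})^{⊗n}`, identified with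
functions `Fin n → Fin m`) of applying `R` to the tensor factors `p, p+1`
(0-indexed) and the identity elsewhere. -/
def Rpos {k : Type*} [CommRing k] (t : k) (m n : ℕ) (p : ℕ) :
    Matrix (Fin n → Fin m) (Fin n → Fin m) k :=
  fun b a =>
    if hp : p + 1 < n then
      Rc t (a ⟨p, Nat.lt_of_succ_lt hp⟩) (a ⟨p + 1, hp⟩)
           (b ⟨p, Nat.lt_of_succ_lt hp⟩) (b ⟨p + 1, hp⟩) *
        ∏ q : Fin n, if q.1 = p ∨ q.1 = p + 1 then 1 else if b q = a q then 1 else 0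
    else if b = a then 1 else 0

/-- The left wall interaction: delete the leftmost tensor factor. -/
def Lwall {k : Type*} [CommRing k] (m n : ℕ) :
    Matrix (Fin n → Fin m) (Fin (n + 1) → Fin m) k :=
  fun b a => if b = (fun j => a j.succ) then 1 else 0

/-- The right wall interaction: delete the rightmost tensor factor. -/
def Rwall {k : Type*} [CommRing k] (m n : ℕ) :
    Matrix (Fin n → Fin m) (Fin (n + 1) → Fin m) k :=
  fun b a => if b = (fun j => a j.castSucc) then 1 else 0

/-- The left face map `d_i^ℓ : C_{n+1} → C_n` (`1 ≤ i ≤ n+1`):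
apply `R` successively, moving the `i`-th strand to the left wall, then
delete the leftmost tensor factor. -/
def dL {k : Type*} [CommRing k] (t : k) (m n : ℕ) (i : ℕ) :
    Matrix (Fin n → Fin m) (Fin (n + 1) → Fin m) k :=
  Lwall m n * ((List.range (i - 1)).map (fun p => Rpos t m (n + 1) p)).prod

/-- The right face map `d_i^r : C_{n+1} → C_n` (`1 ≤ i ≤ n+1`):
apply `R` successively, moving the `i`-th strand to the right wall, then
delete the rightmost tensor factor. -/
def dR {k : Type*} [CommRing k] (t : k) (m n : ℕ) (i : ℕ) :
    Matrix (Fin n → Fin m) (Fin (n + 1) → Fin m) k :=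
  Rwall m n * ((List.range (n + 1 - i)).map (fun q => Rpos t m (n + 1) (n - 1 - q))).prod

/-- The duality involution `τ_m(a_1,…,a_n) = (m+1−a_n,…,m+1−a_1)` as a matrix. -/
def Tmat {k : Type*} [CommRing k] (m n : ℕ) :
    Matrix (Fin n → Fin m) (Fin n → Fin m) k :=
  fun b a => if b = (fun j => (a j.rev).rev) then 1 else 0

/-- The Yang-Baxter boundary map `∂ = Σ_{i=1}^{n+1} (−1)^i (d_i^ℓ − d_i^r) : C_{n+1} → C_n`. -/
def bd {k : Type*} [CommRing k] (t : k) (m n : ℕ) :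
    Matrix (Fin n → Fin m) (Fin (n + 1) → Fin m) k :=
  ∑ i ∈ Finset.Icc 1 (n + 1), (-1 : k) ^ i • (dL t m n i - dR t m n i)

/-! `Tmat` is the permutation matrix of the involution `tau` of basis words. The weights of
`R_{(m)}` are invariant under exchanging the two strands while reversing every letter
(`Rc_rev`), so conjugation by `τ_m` carries `R` acting on strands `p, p+1` to `R` acting on the
mirror strands `q, q+1`, `p + q + 2 = N`, and deleting the leftmost tensor factor to deleting the
rightmost one. Intertwining by `τ_m` is multiplicative, so the word in `R` defining `d_i^ℓ` is
carried to the word defining `d_{n+2-i}^r`. -/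

def tau (m n : ℕ) (a : Fin n → Fin m) : Fin n → Fin m := fun j => (a j.rev).rev

lemma tau_involutive (m n : ℕ) : Function.Involutive (tau m n) := fun a => by
  funext j; simp [tau]

lemma eq_tau_iff {m n : ℕ} {a b : Fin n → Fin m} : b = tau m n a ↔ tau m n b = a :=
  ⟨fun h => h ▸ tau_involutive m n a, fun h => h ▸ (tau_involutive m n b).symm⟩

lemma Tmat_eq_toMatrix {k : Type*} [CommRing k] (m n : ℕ) :
    Tmat (k := k) m n = ((tau_involutive m n).toPerm _).toPEquiv.toMatrix := by
  ext b a
  simp only [Tmat, PEquiv.toMatrix_apply, Equiv.toPEquiv_apply, Option.mem_some_iff,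
    Function.Involutive.coe_toPerm]
  exact if_congr eq_tau_iff rfl rfl

-- Writing `(k := k)` fixes the ring before `*` is elaborated; otherwise the default `HMul`
-- instance of `CStarMatrix` is picked and the lemmas no longer rewrite.
lemma Tmat_mul {k : Type*} [CommRing k] {m n : ℕ} {ι : Type*} [Fintype ι]
    (M : Matrix (Fin n → Fin m) ι k) : Tmat (k := k) m n * M = M.submatrix (tau m n) id := by
  rw [Tmat_eq_toMatrix]
  exact PEquiv.toMatrix_toPEquiv_mul _ M

lemma mul_Tmat {k : Type*} [CommRing k] {m n : ℕ} {ι : Type*} [Fintype ι]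
    (M : Matrix ι (Fin n → Fin m) k) : M * Tmat (k := k) m n = M.submatrix id (tau m n) := by
  rw [Tmat_eq_toMatrix]
  exact PEquiv.mul_toMatrix_toPEquiv M _

theorem SemiconjBy.list_prod_map {M ι : Type*} [Monoid M] {a : M} {f g : ι → M} {l : List ι}
    (h : ∀ i ∈ l, SemiconjBy a (f i) (g i)) :
    SemiconjBy a (l.map f).prod (l.map g).prod := by
  induction l with
  | nil => exact SemiconjBy.one_right a
  | cons i l ih =>
    simpa using (h i (by simp)).mul_right (ih fun j hj => h j (by simp [hj]))

lemma Rc_rev {k : Type*} [CommRing k] (t : k) {m : ℕ} (a b c d : Fin m) :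
    Rc t b.rev a.rev d.rev c.rev = Rc t a b c d := by
  unfold Rc
  simp only [Fin.rev_inj, Fin.rev_le_rev, Fin.rev_lt_rev]
  split_ifs <;> grind

lemma semiconjBy_Tmat_Rpos {k : Type*} [CommRing k] (t : k) {m N p q : ℕ}
    (hpq : p + q + 2 = N) : SemiconjBy (Tmat m N) (Rpos t m N p) (Rpos t m N q) := by
  have hp : p + 1 < N := by omega
  have hq : q + 1 < N := by omega
  have rev_p : Fin.rev (⟨p, by omega⟩ : Fin N) = ⟨q + 1, hq⟩ := Fin.ext (by simp; omega)
  have rev_p1 : Fin.rev (⟨p + 1, hp⟩ : Fin N) = ⟨q, by omega⟩ := Fin.ext (by simp; omega)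
  have rev_q : Fin.rev (⟨q, by omega⟩ : Fin N) = ⟨p + 1, hp⟩ := Fin.ext (by simp; omega)
  have rev_q1 : Fin.rev (⟨q + 1, hq⟩ : Fin N) = ⟨p, by omega⟩ := Fin.ext (by simp; omega)
  rw [SemiconjBy, Tmat_mul, mul_Tmat]
  ext b a
  simp only [Matrix.submatrix_apply, id, Rpos, dif_pos hp, dif_pos hq]
  congr 1
  · simp only [tau, rev_p, rev_p1, rev_q, rev_q1]
    rw [← Rc_rev t (a _) (a _), Fin.rev_rev, Fin.rev_rev]
  · refine Fintype.prod_equiv Fin.revPerm _ _ fun j => ?_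
    have hj := j.2
    simp only [Fin.revPerm_apply, tau, Fin.rev_rev, Fin.val_rev, Fin.rev_eq_iff]
    grind

lemma Tmat_mul_Lwall {k : Type*} [CommRing k] (m n : ℕ) :
    Tmat (k := k) m n * Lwall (k := k) m n = Rwall (k := k) m n * Tmat (k := k) m (n + 1) := by
  rw [Tmat_mul, mul_Tmat]
  ext b a
  have tau_succ : tau m n (fun j => a j.succ) = fun j => tau m (n + 1) a j.castSucc :=
    funext fun j => by simp [tau, Fin.rev_castSucc]
  simp only [Matrix.submatrix_apply, id, Lwall, Rwall, ← tau_succ]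
  exact if_congr eq_tau_iff.symm rfl rfl

lemma Tmat_mul_mul_eq {k : Type*} [CommRing k] {m n₁ n₂ n₃ : ℕ}
    {A A' : Matrix (Fin n₁ → Fin m) (Fin n₂ → Fin m) k}
    {B B' : Matrix (Fin n₂ → Fin m) (Fin n₃ → Fin m) k}
    (hA : Tmat (k := k) m n₁ * A = A' * Tmat (k := k) m n₂)
    (hB : Tmat (k := k) m n₂ * B = B' * Tmat (k := k) m n₃) :
    Tmat (k := k) m n₁ * (A * B) = A' * B' * Tmat (k := k) m n₃ := by
  rw [← Matrix.mul_assoc, hA, Matrix.mul_assoc, hB, Matrix.mul_assoc]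

/-- The face maps go from `C_{n+1}` to `C_n`, so the paper's dual index `n+1-i` reads `n+2-i`. -/
theorem tau_precubic_morphism_general {k : Type*} [CommRing k] (t : k) (m n i : ℕ)
    (h2 : i ≤ n + 1) :
    Tmat m n * dL t m n i = dR t m n (n + 2 - i) * Tmat (k := k) m (n + 1) := by
  have hR : SemiconjBy (Tmat m (n + 1))
      ((List.range (i - 1)).map (Rpos t m (n + 1))).prod
      ((List.range (n + 1 - (n + 2 - i))).map fun q => Rpos t m (n + 1) (n - 1 - q)).prod := by
    rw [show n + 1 - (n + 2 - i) = i - 1 by omega]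
    exact SemiconjBy.list_prod_map fun p hp =>
      semiconjBy_Tmat_Rpos t (by simp only [List.mem_range] at hp; omega)
  exact Tmat_mul_mul_eq (Tmat_mul_Lwall m n) hR

/-- The duality map `τ_m` satisfies the precubic morphism identity
`τ_m ∘ d_{i,n}^ℓ = d_{n+1−i,n}^r ∘ τ_m` (here the face maps go from the
`(n+1)`-st to the `n`-th chain group, so the dual index is `n+2-i`). -/
theorem tau_precubic_morphism {k : Type*} [CommRing k] (t : k) (m n i : ℕ)
    (h1 : 1 ≤ i) (h2 : i ≤ n + 1) :
    Tmat m n * dL t m n i = dR t m n (n + 2 - i) * Tmat (k := k) m (n + 1) :=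
  tau_precubic_morphism_general t m n i h2
end
end

section
/- For a ≤ b ≤ c ≤ d in X_{(m)}, d_4^ℓ(a⊗b⊗c⊗d) = (1−y²)³(b,c,d) + y²(1−y²)²(a,c,d) + y²(1−y²)²(c,b,d) + y⁴(1−y²)(a,b,d) + y²(1−y²)²(b,d,c) + y⁴(1−y²)(a,d,c) + y⁴(1−y²)(d,b,c) + y⁶(a,b,c). -/
/-! Since `a ≤ b ≤ c ≤ d`, every crossing the fourth strand meets on its way to the left wall
involves a weakly increasing pair, on whose basis vector `R` acts as `(1 - y²) • id + y² • swap`.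
Expanding the three crossings gives the eight terms; the wall deletes the leftmost entry. -/

noncomputable section

lemma Rc_of_le {k : Type*} [CommRing k] (t : k) {m : ℕ} {x y : Fin m} (h : x ≤ y) (c d : Fin m) :
    Rc t x y c d = (1 - t) * (if c = x ∧ d = y then 1 else 0)
      + t * (if c = y ∧ d = x then 1 else 0) := by
  unfold Rc
  rcases h.eq_or_lt with rfl | hlt
  · split_ifs <;> simp_all
  · have := hlt.ne
    have := hlt.not_ge
    split_ifs <;> simp_all

lemma prod_ite_eq_off_pair {k : Type*} [CommRing k] {m n p : ℕ} (x v : Fin n → Fin m) :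
    (∏ q : Fin n, if q.1 = p ∨ q.1 = p + 1 then (1 : k) else if x q = v q then 1 else 0)
      = if ∀ q : Fin n, q.1 ≠ p → q.1 ≠ p + 1 → x q = v q then 1 else 0 := by
  split_ifs with h
  · refine Finset.prod_eq_one fun q _ => ?_
    by_cases hq : q.1 = p ∨ q.1 = p + 1
    · simp [hq]
    · push Not at hq
      simp [hq.1, hq.2, h q hq.1 hq.2]
  · push Not at h
    obtain ⟨q, hq1, hq2, hq3⟩ := h
    exact Finset.prod_eq_zero (Finset.mem_univ q) (by simp [hq1, hq2, hq3])

lemma eq_iff_of_agree_off_pair {m n p : ℕ} (hp : p + 1 < n) (x v : Fin n → Fin m) :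
    x = v ↔ (x ⟨p, by omega⟩ = v ⟨p, by omega⟩ ∧ x ⟨p + 1, hp⟩ = v ⟨p + 1, hp⟩) ∧
      ∀ q : Fin n, q.1 ≠ p → q.1 ≠ p + 1 → x q = v q := by
  refine ⟨by rintro rfl; simp, fun ⟨⟨h1, h2⟩, h3⟩ => funext fun q => ?_⟩
  by_cases hq1 : q.1 = p
  · rwa [show q = ⟨p, by omega⟩ from Fin.ext hq1]
  by_cases hq2 : q.1 = p + 1
  · rwa [show q = ⟨p + 1, hp⟩ from Fin.ext hq2]
  exact h3 q hq1 hq2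

lemma Rpos_apply_of_le {k : Type*} [CommRing k] (t : k) {m n p : ℕ} (hp : p + 1 < n)
    (v : Fin n → Fin m) (h : v ⟨p, by omega⟩ ≤ v ⟨p + 1, hp⟩) (x : Fin n → Fin m) :
    Rpos t m n p x v = (1 - t) * (if x = v then 1 else 0)
      + t * (if x = v ∘ Equiv.swap ⟨p, by omega⟩ ⟨p + 1, hp⟩ then 1 else 0) := by
  unfold Rpos
  rw [dif_pos hp, Rc_of_le t h, prod_ite_eq_off_pair, add_mul, mul_assoc, mul_assoc,
    ite_zero_mul_ite_zero, ite_zero_mul_ite_zero, one_mul]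
  congr 2 <;> refine if_congr ?_ rfl rfl <;> rw [eq_iff_of_agree_off_pair hp]
  refine and_congr (by simp) (forall_congr' fun q => imp_congr_right fun hq1 =>
    imp_congr_right fun hq2 => ?_)
  rw [Function.comp_apply, Equiv.swap_apply_of_ne_of_ne (Fin.ne_of_val_ne hq1)
    (Fin.ne_of_val_ne hq2)]

lemma mul_Rpos_apply_of_le {k : Type*} [CommRing k] (t : k) {m n n' p : ℕ} (hp : p + 1 < n)
    (N : Matrix (Fin n' → Fin m) (Fin n → Fin m) k) (v u : Fin n → Fin m)
    (h : v ⟨p, by omega⟩ ≤ v ⟨p + 1, hp⟩) (hu : u = v ∘ Equiv.swap ⟨p, by omega⟩ ⟨p + 1, hp⟩)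
    (w : Fin n' → Fin m) :
    (N * Rpos t m n p) w v = (1 - t) * N w v + t * N w u := by
  subst hu
  simp only [Matrix.mul_apply, Rpos_apply_of_le t hp v h, mul_add, Finset.sum_add_distrib,
    mul_ite, mul_one, mul_zero, Finset.sum_ite_eq']
  simp [mul_comm]

lemma Lwall_apply_vecCons {k : Type*} [CommRing k] (m n : ℕ) (w v : Fin n → Fin m) (x : Fin m) :
    Lwall (k := k) m n w (Matrix.vecCons x v) = if w = v then 1 else 0 :=
  rfl

lemma dL_one {k : Type*} [CommRing k] (t : k) (m n : ℕ) : dL t m n 1 = Lwall m n :=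
  Matrix.mul_one _

lemma dL_succ {k : Type*} [CommRing k] (t : k) (m n : ℕ) {i : ℕ} (hi : 1 ≤ i) :
    dL t m n (i + 1) = dL t m n i * Rpos t m (n + 1) (i - 1) := by
  obtain ⟨j, rfl⟩ := Nat.exists_eq_add_of_le' hi
  simp only [dL, Nat.add_sub_cancel, List.range_succ, List.map_append, List.prod_append,
    List.map_singleton, List.prod_singleton]
  exact (Matrix.mul_assoc _ _ _).symm

/-- For `a ≤ b ≤ c ≤ d` in `X_{(m)}`,
`d_4^ℓ(a⊗b⊗c⊗d) = (1−y²)³(b,c,d) + y²(1−y²)²(a,c,d) + y²(1−y²)²(c,b,d)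
+ y⁴(1−y²)(a,b,d) + y²(1−y²)²(b,d,c) + y⁴(1−y²)(a,d,c) + y⁴(1−y²)(d,b,c) + y⁶(a,b,c)`
(stated coefficientwise: `w` ranges over the basis 3-tuples, `t = y²`). -/
theorem d4l_formula {k : Type*} [CommRing k] (t : k) (m : ℕ) (a b c d : Fin m)
    (hab : a ≤ b) (hbc : b ≤ c) (hcd : c ≤ d) (w : Fin 3 → Fin m) :
    dL t m 3 4 w ![a, b, c, d] =
      (1 - t) ^ 3 * (if w = ![b, c, d] then 1 else 0)
      + t * (1 - t) ^ 2 * (if w = ![a, c, d] then 1 else 0)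
      + t * (1 - t) ^ 2 * (if w = ![c, b, d] then 1 else 0)
      + t ^ 2 * (1 - t) * (if w = ![a, b, d] then 1 else 0)
      + t * (1 - t) ^ 2 * (if w = ![b, d, c] then 1 else 0)
      + t ^ 2 * (1 - t) * (if w = ![a, d, c] then 1 else 0)
      + t ^ 2 * (1 - t) * (if w = ![d, b, c] then 1 else 0)
      + t ^ 3 * (if w = ![a, b, c] then 1 else 0) := by
  have h2 : 2 + 1 < 3 + 1 := by norm_num
  have h1 : 1 + 1 < 3 + 1 := by norm_num
  have h0 : 0 + 1 < 3 + 1 := by norm_num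
  have hdL : dL t m 3 4
      = Lwall (k := k) m 3 * Rpos t m (3 + 1) 0 * Rpos t m (3 + 1) 1 * Rpos t m (3 + 1) 2 := by
    rw [dL_succ t m 3 (by norm_num : 1 ≤ 3), dL_succ t m 3 (by norm_num : 1 ≤ 2),
      dL_succ t m 3 le_rfl, dL_one]
  rw [hdL, mul_Rpos_apply_of_le t h2 _ ![a, b, c, d] ![a, b, d, c] hcd,
    mul_Rpos_apply_of_le t h1 _ ![a, b, c, d] ![a, c, b, d] hbc,
    mul_Rpos_apply_of_le t h1 _ ![a, b, d, c] ![a, d, b, c] (hbc.trans hcd),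
    mul_Rpos_apply_of_le t h0 _ ![a, b, c, d] ![b, a, c, d] hab,
    mul_Rpos_apply_of_le t h0 _ ![a, c, b, d] ![c, a, b, d] (hab.trans hbc),
    mul_Rpos_apply_of_le t h0 _ ![a, b, d, c] ![b, a, d, c] hab,
    mul_Rpos_apply_of_le t h0 _ ![a, d, b, c] ![d, a, b, c] (hab.trans (hbc.trans hcd))]
  · simp only [Lwall_apply_vecCons]
    ring
  -- the goals `u = v ∘ Equiv.swap _ _` left open by the expansions above
  all_goals funext i; fin_cases i <;> rfl
end
end
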